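/- arXiv:math/0002254 — 4 statements merged into one kernel-verified Lean document; each statement's English description precedes it below -/
import Mathlib

section
/- If χ is a primitive odd Dirichlet character modulo q, then L(0, conj(χ)) / L(1, χ) = τ(conj(χ))/(πi), where τ(χ) = Σ_{b=1}^{q} χ(b) e^{2πib/q} is the Gauss sum. -/
/-!
For odd `χ` the gamma factor is `Γ_ℝ(s + 1)`, so `L(0, χ̄) = Λ(0, χ̄)` while
`L(1, χ) = π Λ(1, χ)`. The functional equation for the primitive character `χ̄ = χ⁻¹` at
`s = 1` gives `Λ(0, χ̄) = (τ(χ̄) / i) Λ(1, χ)`, the powers of `q` cancelling, and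
`Λ(1, χ) ≠ 0` because `L(1, χ) ≠ 0`.
-/

open Real Complex

/-- The Gauss sum `τ(χ) = ∑_{b=1}^q χ(b) e^{2πib/q}` of a Dirichlet character mod `q`. -/
noncomputable def gaussSumExp {q : ℕ} (χ : DirichletCharacter ℂ q) : ℂ :=
  ∑ b ∈ Finset.range q, χ (b : ZMod q) * Complex.exp (2 * π * I * b / q)

lemma Complex.Gammaℝ_two : Gammaℝ 2 = (π : ℂ)⁻¹ := by
  norm_num [Gammaℝ_def, cpow_neg_one]

namespace DirichletCharacter

variable {N : ℕ}

lemma Odd.inv {R : Type*} [CommRing R] {χ : DirichletCharacter R N} (hχ : χ.Odd) :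
    χ⁻¹.Odd := by
  rw [DirichletCharacter.Odd, MulChar.inv_apply_eq_inv, hχ]
  exact Ring.inverse_unit (-1 : Rˣ)

lemma Odd.ne_one {R : Type*} [CommRing R] [NeZero (2 : R)] {χ : DirichletCharacter R N}
    (hχ : χ.Odd) : χ ≠ 1 := by
  rintro rfl
  exact Odd.not_even _ hχ (MulChar.one_apply isUnit_one.neg)

lemma IsPrimitive.inv {R : Type*} [CommMonoidWithZero R] {χ : DirichletCharacter R N}
    (hχ : χ.IsPrimitive) : χ⁻¹.IsPrimitive :=
  (conductor_inv χ).trans hχ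

variable [NeZero N]

lemma Odd.rootNumber_eq {χ : DirichletCharacter ℂ N} (hχ : χ.Odd) :
    rootNumber χ = gaussSum χ ZMod.stdAddChar / I / N ^ (1 / 2 : ℂ) := by
  rw [rootNumber, if_neg hχ.not_even, pow_one]

lemma Odd.LFunction_eq {χ : DirichletCharacter ℂ N} (hχ : χ.Odd) (s : ℂ) :
    LFunction χ s = completedLFunction χ s / Gammaℝ (s + 1) := by
  rw [LFunction_eq_completed_div_gammaFactor _ _ (.inr fun h ↦ hχ.ne_one (level_one' χ h)),
    hχ.gammaFactor_def]

lemma Odd.LFunction_zero {χ : DirichletCharacter ℂ N} (hχ : χ.Odd) :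
    LFunction χ 0 = completedLFunction χ 0 := by
  rw [hχ.LFunction_eq, zero_add, Gammaℝ_one, div_one]

lemma Odd.LFunction_one {χ : DirichletCharacter ℂ N} (hχ : χ.Odd) :
    LFunction χ 1 = π * completedLFunction χ 1 := by
  rw [hχ.LFunction_eq, one_add_one_eq_two, Gammaℝ_two, div_inv_eq_mul, mul_comm]

lemma IsPrimitive.completedLFunction_zero_of_odd {χ : DirichletCharacter ℂ N}
    (hprim : χ.IsPrimitive) (hodd : χ.Odd) :
    completedLFunction χ 0 = gaussSum χ ZMod.stdAddChar / I * completedLFunction χ⁻¹ 1 := by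
  have hN : (N : ℂ) ^ (1 / 2 : ℂ) ≠ 0 := by simp [NeZero.ne N]
  rw [← sub_self 1, hprim.completedLFunction_one_sub, hodd.rootNumber_eq,
    show (1 : ℂ) - 1 / 2 = 1 / 2 by norm_num]
  field_simp

end DirichletCharacter

lemma gaussSumExp_eq_gaussSum {q : ℕ} [NeZero q] (χ : DirichletCharacter ℂ q) :
    gaussSumExp χ = gaussSum χ ZMod.stdAddChar := by
  refine Finset.sum_nbij' (fun b ↦ (b : ZMod q)) ZMod.val (fun _ _ ↦ Finset.mem_univ _)
    (fun a _ ↦ Finset.mem_range.mpr a.val_lt)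
    (fun b hb ↦ ZMod.val_cast_of_lt (Finset.mem_range.mp hb))
    (fun a _ ↦ ZMod.natCast_zmod_val a) (fun b _ ↦ ?_)
  congr 1
  simpa using (ZMod.stdAddChar_coe (N := q) b).symm

/-- If `χ` is a primitive odd Dirichlet character modulo `q`, then
`L(0, conj χ)/L(1, χ) = τ(conj χ)/(πi)`. -/
theorem LFunction_zero_div_LFunction_one_of_odd_primitive {q : ℕ} [NeZero q]
    (χ : DirichletCharacter ℂ q) (hprim : χ.IsPrimitive) (hodd : χ.Odd) :
    DirichletCharacter.LFunction (star χ) 0 / DirichletCharacter.LFunction χ 1 =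
      gaussSumExp (star χ) / ((π : ℂ) * I) := by
  have hL1 : χ.LFunction 1 ≠ 0 := DirichletCharacter.LFunction_apply_one_ne_zero hodd.ne_one
  rw [hodd.LFunction_one] at hL1 ⊢
  rw [MulChar.star_eq_inv, gaussSumExp_eq_gaussSum, hodd.inv.LFunction_zero,
    hprim.inv.completedLFunction_zero_of_odd hodd.inv, inv_inv]
  have hπ : (π : ℂ) ≠ 0 := by exact_mod_cast pi_ne_zero
  have hΛ1 : χ.completedLFunction 1 ≠ 0 := right_ne_zero_of_mul hL1
  field_simp
end

section
/- For a non-principal primitive character χ₁ modulo q₁ inducing χ modulo q: if gcd(q₁, q/q₁) > 1 or q/q₁ is not squarefree then τ(χ) = 0; and if gcd(q₁, q/q₁) = 1 and q/q₁ is squarefree then τ(χ) = μ(q/q₁) χ₁(q/q₁) τ(χ₁). -/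
open Real Complex

/-!
Write `q = q₁ d`. The character induced by `χ₁` is `b ↦ [gcd(b, d) = 1] χ₁(b)`, and detecting
the coprimality by `∑_{i ∣ gcd(b, d)} μ(i)` turns `τ(χ)` into
`∑_{i ∣ d} μ(i) ∑_{i ∣ b} χ₁(b) e(b/q)`. Substituting `b = i c`, the inner sum is
`χ₁(i) ∑_{c < q₁ m} χ₁(c) e(c/(q₁ m))` with `m = d/i`; as `χ₁` has period `q₁`, this factors
through the geometric sum `∑_{s < m} e(s/m)`, which vanishes unless `m = 1`. Only `i = d`
survives, so `τ(χ) = μ(d) χ₁(d) τ(χ₁)`, and in the two exceptional cases `χ₁(d) = 0` or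
`μ(d) = 0`.
-/

open Finset ArithmeticFunction
open scoped ArithmeticFunction.Moebius

lemma sum_range_exp_eq_zero {m : ℕ} (hm : 1 < m) :
    ∑ s ∈ range m, exp (2 * π * I * s / m) = 0 := by
  rw [← (isPrimitiveRoot_exp m (by omega)).geom_sum_eq_zero hm]
  refine sum_congr rfl fun s _ => ?_
  rw [← Complex.exp_nat_mul]
  ring_nf

lemma sum_range_mul_eq_sum_sum {M : Type*} [AddCommMonoid M] (a m : ℕ) (g : ℕ → M) :
    ∑ c ∈ range (a * m), g c = ∑ r ∈ range a, ∑ s ∈ range m, g (r + a * s) := by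
  induction m with
  | zero => simp
  | succ m ih =>
    rw [Nat.mul_succ, sum_range_add, ih, add_comm]
    simp only [sum_range_succ, sum_add_distrib, add_comm]

lemma sum_range_mul_filter_dvd {M : Type*} [AddCommMonoid M] {i : ℕ} (hi : i ≠ 0) (N : ℕ)
    (f : ℕ → M) : ∑ b ∈ range (i * N) with i ∣ b, f b = ∑ c ∈ range N, f (i * c) := by
  have himage : {b ∈ range (i * N) | i ∣ b} = (range N).image (i * ·) := by
    ext b
    simp only [mem_filter, mem_range, mem_image]
    constructor
    · rintro ⟨hb, c, rfl⟩
      exact ⟨c, Nat.lt_of_mul_lt_mul_left hb, rfl⟩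
    · rintro ⟨c, hc, rfl⟩
      exact ⟨Nat.mul_lt_mul_of_pos_left hc (Nat.pos_of_ne_zero hi), dvd_mul_right i c⟩
  rw [himage, sum_image fun x _ y _ h => Nat.eq_of_mul_eq_mul_left (Nat.pos_of_ne_zero hi) h]

lemma sum_moebius_filter_dvd (R : Type*) [Ring R] {d : ℕ} (hd : d ≠ 0) (b : ℕ) :
    ∑ i ∈ d.divisors with i ∣ b, (μ i : R) = if b.Coprime d then 1 else 0 := by
  have hfilter : {i ∈ d.divisors | i ∣ b} = {i ∈ d.divisors | i ∣ b.gcd d} :=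
    filter_congr fun i hi => by simp [Nat.dvd_gcd_iff, Nat.dvd_of_mem_divisors hi]
  have hsum := congr_arg (· (b.gcd d)) (coe_moebius_mul_coe_zeta (R := R))
  simp only [coe_mul_zeta_apply, intCoe_apply, one_apply] at hsum
  rw [hfilter, Nat.divisors_filter_dvd_of_dvd hd (Nat.gcd_dvd_right b d), hsum]

lemma DirichletCharacter.changeLevel_mul_apply_natCast {R : Type*} [CommMonoidWithZero R]
    {q₁ : ℕ} (χ : DirichletCharacter R q₁) (d b : ℕ) :
    changeLevel (dvd_mul_right q₁ d) χ b = if b.Coprime d then χ b else 0 := by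
  by_cases hb : IsUnit (b : ZMod (q₁ * d))
  · have hco := (ZMod.isUnit_iff_coprime b (q₁ * d)).mp hb
    rw [if_pos (Nat.Coprime.coprime_dvd_right (dvd_mul_left d q₁) hco), ← hb.unit_spec,
      changeLevel_eq_cast_of_dvd, hb.unit_spec, ZMod.cast_natCast (dvd_mul_right q₁ d)]
  · rw [MulChar.map_nonunit _ hb]
    rw [ZMod.isUnit_iff_coprime, Nat.coprime_mul_iff_right, not_and_or] at hb
    rcases hb with hb | hb
    · rw [MulChar.map_nonunit _ (by rwa [ZMod.isUnit_iff_coprime]), ite_self]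
    · rw [if_neg hb]

lemma sum_periodic_mul_exp_eq_zero {q₁ m : ℕ} (hm : 1 < m) (f : ZMod q₁ → ℂ) :
    ∑ c ∈ range (q₁ * m), f c * exp (2 * π * I * c / (q₁ * m : ℕ)) = 0 := by
  rcases eq_or_ne q₁ 0 with rfl | hq₁
  · simp
  have hexp (r s : ℕ) : exp (2 * π * I * (r + q₁ * s : ℕ) / (q₁ * m : ℕ)) =
      exp (2 * π * I * r / (q₁ * m : ℕ)) * exp (2 * π * I * s / m) := by
    rw [← Complex.exp_add]
    congr 1
    push_cast
    field_simp
  calc ∑ c ∈ range (q₁ * m), f c * exp (2 * π * I * c / (q₁ * m : ℕ))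
      = ∑ r ∈ range q₁, ∑ s ∈ range m,
          f r * exp (2 * π * I * r / (q₁ * m : ℕ)) * exp (2 * π * I * s / m) := by
        rw [sum_range_mul_eq_sum_sum]
        refine sum_congr rfl fun r _ => sum_congr rfl fun s _ => ?_
        rw [hexp, ← mul_assoc]
        simp
    _ = 0 := by rw [← sum_mul_sum, sum_range_exp_eq_zero hm, mul_zero]

lemma sum_filter_dvd_mul_exp_eq_ite {q₁ : ℕ} (χ : DirichletCharacter ℂ q₁) {i d : ℕ}
    (hd : d ≠ 0) (hid : i ∣ d) :
    ∑ b ∈ range (q₁ * d) with i ∣ b, χ b * exp (2 * π * I * b / (q₁ * d : ℕ)) =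
      if i = d then χ d * gaussSumExp χ else 0 := by
  obtain ⟨m, rfl⟩ := hid
  have hi : i ≠ 0 := left_ne_zero_of_mul hd
  have hrescale : ∑ b ∈ range (q₁ * (i * m)) with i ∣ b,
      χ b * exp (2 * π * I * b / (q₁ * (i * m) : ℕ)) =
        χ i * ∑ c ∈ range (q₁ * m), χ c * exp (2 * π * I * c / (q₁ * m : ℕ)) := by
    rw [mul_left_comm, sum_range_mul_filter_dvd hi, mul_sum]
    refine sum_congr rfl fun c _ => ?_
    have hiC : (i : ℂ) ≠ 0 := Nat.cast_ne_zero.2 hi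
    push_cast
    rw [map_mul, mul_assoc]
    congr 3
    field_simp
  rw [hrescale]
  rcases (Nat.one_le_iff_ne_zero.2 (right_ne_zero_of_mul hd)).eq_or_lt with rfl | hm
  · simp [gaussSumExp]
  · rw [if_neg ((Nat.lt_mul_iff_one_lt_right (Nat.pos_of_ne_zero hi)).2 hm).ne,
      sum_periodic_mul_exp_eq_zero hm, mul_zero]

theorem gaussSumExp_changeLevel_mul {q₁ : ℕ} (χ : DirichletCharacter ℂ q₁) {d : ℕ}
    (hd : d ≠ 0) :
    gaussSumExp (DirichletCharacter.changeLevel (dvd_mul_right q₁ d) χ) =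
      μ d * χ d * gaussSumExp χ := by
  calc gaussSumExp (DirichletCharacter.changeLevel (dvd_mul_right q₁ d) χ)
      = ∑ b ∈ range (q₁ * d), ∑ i ∈ d.divisors,
          if i ∣ b then μ i * (χ b * exp (2 * π * I * b / (q₁ * d : ℕ))) else 0 := by
        refine sum_congr rfl fun b _ => ?_
        rw [DirichletCharacter.changeLevel_mul_apply_natCast, ← sum_filter, ← sum_mul,
          sum_moebius_filter_dvd ℂ hd, ite_mul, ite_mul, one_mul, zero_mul, zero_mul]
    _ = ∑ i ∈ d.divisors, μ i * ∑ b ∈ range (q₁ * d) with i ∣ b,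
          χ b * exp (2 * π * I * b / (q₁ * d : ℕ)) := by
        rw [sum_comm]
        simp only [sum_filter, mul_sum, mul_ite, mul_zero]
    _ = ∑ i ∈ d.divisors, μ i * if i = d then χ d * gaussSumExp χ else 0 :=
        sum_congr rfl fun i hi => by
          rw [sum_filter_dvd_mul_exp_eq_ite χ hd (Nat.dvd_of_mem_divisors hi)]
    _ = μ d * χ d * gaussSumExp χ := by simp [hd, mul_assoc]

theorem gaussSum_changeLevel_general {q₁ q : ℕ} (hdvd : q₁ ∣ q)
    (χ₁ : DirichletCharacter ℂ q₁) :
    ((¬Nat.Coprime q₁ (q / q₁) ∨ ¬Squarefree (q / q₁)) →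
      gaussSumExp (DirichletCharacter.changeLevel hdvd χ₁) = 0) ∧
    (Nat.Coprime q₁ (q / q₁) → Squarefree (q / q₁) →
      gaussSumExp (DirichletCharacter.changeLevel hdvd χ₁) =
        (ArithmeticFunction.moebius (q / q₁) : ℂ) * χ₁ ((q / q₁ : ℕ) : ZMod q₁) *
          gaussSumExp χ₁) := by
  rcases eq_or_ne q 0 with rfl | hq
  · -- at level 0 the Gauss sum is empty and `q / q₁ = 0` is not squarefree
    simp [gaussSumExp]
  obtain ⟨d, rfl⟩ := hdvd
  rw [Nat.mul_div_cancel_left d (Nat.pos_of_ne_zero (left_ne_zero_of_mul hq)),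
    gaussSumExp_changeLevel_mul χ₁ (right_ne_zero_of_mul hq)]
  refine ⟨?_, fun _ _ => rfl⟩
  rintro (hcop | hsf)
  · rw [χ₁.map_nonunit (by rwa [ZMod.isUnit_iff_coprime, Nat.coprime_comm]), mul_zero, zero_mul]
  · rw [moebius_eq_zero_of_not_squarefree hsf, Int.cast_zero, zero_mul, zero_mul]

/-- If `χ₁` is a non-principal primitive character mod `q₁` inducing `χ` mod `q`, then
`τ(χ) = 0` unless `gcd(q₁, q/q₁) = 1` and `q/q₁` is squarefree, in which case
`τ(χ) = μ(q/q₁) χ₁(q/q₁) τ(χ₁)`. -/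
theorem gaussSum_changeLevel {q₁ q : ℕ} (hq : 0 < q) (hdvd : q₁ ∣ q)
    (χ₁ : DirichletCharacter ℂ q₁) (hne : χ₁ ≠ 1) (hprim : χ₁.IsPrimitive) :
    ((¬Nat.Coprime q₁ (q / q₁) ∨ ¬Squarefree (q / q₁)) →
      gaussSumExp (DirichletCharacter.changeLevel hdvd χ₁) = 0) ∧
    (Nat.Coprime q₁ (q / q₁) → Squarefree (q / q₁) →
      gaussSumExp (DirichletCharacter.changeLevel hdvd χ₁) =
        (ArithmeticFunction.moebius (q / q₁) : ℂ) * χ₁ ((q / q₁ : ℕ) : ZMod q₁) *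
          gaussSumExp χ₁) :=
  gaussSum_changeLevel_general hdvd χ₁
end

section
/- For divisors r, d of q with rd | q and m = q/(rd), Σ_{g | m} μ(g)/(g·φ(q/g)) = μ²(q/(rd))·rd/(q·φ(q)) if gcd(rd, q/(rd)) = 1, and 0 otherwise. -/
open scoped Classical
open Finset ArithmeticFunction

/-- Split a sum over divisors of `m` according to divisibility by `p ∣ m`. -/
lemma sum_div_split (p m : ℕ) (hpm : p ∣ m) (hm : m ≠ 0) (hp : p ≠ 0) (F : ℕ → ℚ) :
    ∑ g ∈ m.divisors, F g =
      (∑ g ∈ m.divisors.filter (fun g => ¬ p ∣ g), F g) +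
      ∑ g ∈ (m / p).divisors, F (p * g) := by
  rw [← Finset.sum_filter_add_sum_filter_not m.divisors (fun g => p ∣ g) F, add_comm]
  congr 1
  refine Finset.sum_nbij' (fun g => g / p) (fun g => p * g) ?_ ?_ ?_ ?_ ?_
  · intro g hg
    simp only [Finset.mem_filter, Nat.mem_divisors] at hg
    obtain ⟨⟨hgm, _⟩, g', rfl⟩ := hg
    show p * g' / p ∈ (m / p).divisors
    rw [Nat.mul_div_cancel_left _ (Nat.pos_of_ne_zero hp)]
    refine Nat.mem_divisors.2 ⟨?_, ?_⟩
    · obtain ⟨m', rfl⟩ := hpm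
      rw [Nat.mul_div_cancel_left _ (Nat.pos_of_ne_zero hp)]
      exact (mul_dvd_mul_iff_left hp).mp hgm
    · exact fun h => hm (by rw [← Nat.mul_div_cancel' hpm, h, mul_zero])
  · intro g hg
    simp only [Nat.mem_divisors] at hg
    refine Finset.mem_filter.2 ⟨Nat.mem_divisors.2 ⟨?_, hm⟩, dvd_mul_right p g⟩
    calc p * g ∣ p * (m / p) := mul_dvd_mul_left p hg.1
    _ = m := Nat.mul_div_cancel' hpm
  · intro g hg
    simp only [Finset.mem_filter, Nat.mem_divisors] at hg
    exact Nat.mul_div_cancel' hg.2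
  · intro g hg
    exact Nat.mul_div_cancel_left _ (Nat.pos_of_ne_zero hp)
  · intro g hg
    simp only [Finset.mem_filter, Nat.mem_divisors] at hg
    rw [Nat.mul_div_cancel' hg.2]

lemma sum_zero (N m p : ℕ) (hp : p.Prime) (hN : N ≠ 0) (hm : m ≠ 0) (hmN : m ∣ N)
    (hpm : p ∣ m) (hp2 : p ^ 2 ∣ N) :
    ∑ g ∈ m.divisors, (ArithmeticFunction.moebius g : ℚ) / (g * Nat.totient (N / g)) = 0 := by
  set t : ℕ → ℚ := fun g => (ArithmeticFunction.moebius g : ℚ) / (g * Nat.totient (N / g)) with ht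
  have key : ∀ g : ℕ, g ≠ 0 → g ∣ m / p → ¬ p ∣ g → t (p * g) = - t g := by
    intro g hg0 hg hpg
    have hcop : Nat.Coprime p g := (Nat.Prime.coprime_iff_not_dvd hp).mpr hpg
    have hgN : g ∣ N := (hg.trans (Nat.div_dvd_of_dvd hpm)).trans hmN
    have hpgN : p * g ∣ N :=
      Nat.Coprime.mul_dvd_of_dvd_of_dvd hcop (hpm.trans hmN) hgN
    have hppgN : p * (p * g) ∣ N := by
      have : p ^ 2 * g ∣ N :=
        Nat.Coprime.mul_dvd_of_dvd_of_dvd (Nat.Coprime.pow_left 2 hcop) hp2 hgN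
      simpa [pow_two, mul_assoc] using this
    obtain ⟨k, hk⟩ := hpgN
    have hpg0 : p * g ≠ 0 := mul_ne_zero hp.ne_zero hg0
    have hpk : p ∣ k := by
      have h2 := hppgN
      rw [hk, show p * (p * g) = p * g * p by ring] at h2
      exact (mul_dvd_mul_iff_left hpg0).mp h2
    have hNg : N / g = p * k := by
      rw [hk, show p * g * k = g * (p * k) by ring, Nat.mul_div_cancel_left _ (Nat.pos_of_ne_zero hg0)]
    have hNpg : N / (p * g) = k := by
      rw [hk, Nat.mul_div_cancel_left _ (Nat.pos_of_ne_zero hpg0)]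
    have hphi : Nat.totient (N / g) = p * Nat.totient k := by
      rw [hNg, Nat.totient_mul_of_prime_of_dvd hp hpk]
    have hmu : ArithmeticFunction.moebius (p * g) = - ArithmeticFunction.moebius g := by
      rw [ArithmeticFunction.isMultiplicative_moebius.map_mul_of_coprime hcop,
        ArithmeticFunction.moebius_apply_prime hp, neg_one_mul]
    rw [ht]
    simp only [hNpg, hphi, hmu]
    push_cast
    ring
  rw [sum_div_split p m hpm hm hp.ne_zero t]
  have hfilter : m.divisors.filter (fun g => ¬ p ∣ g) =
      (m / p).divisors.filter (fun g => ¬ p ∣ g) := by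
    ext g
    simp only [Finset.mem_filter, Nat.mem_divisors]
    constructor
    · rintro ⟨⟨hgm, _⟩, hpg⟩
      have hcop : Nat.Coprime g p := ((Nat.Prime.coprime_iff_not_dvd hp).mpr hpg).symm
      refine ⟨⟨?_, ?_⟩, hpg⟩
      · exact hcop.dvd_of_dvd_mul_left (by rwa [Nat.mul_div_cancel' hpm])
      · exact (Nat.div_pos (Nat.le_of_dvd (Nat.pos_of_ne_zero hm) hpm) hp.pos).ne'
    · rintro ⟨⟨hgm, hm'⟩, hpg⟩
      exact ⟨⟨hgm.trans (Nat.div_dvd_of_dvd hpm), hm⟩, hpg⟩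
  have step : ∑ g ∈ (m / p).divisors, t (p * g) =
      ∑ g ∈ (m / p).divisors.filter (fun g => ¬ p ∣ g), t (p * g) := by
    symm
    apply Finset.sum_filter_of_ne
    intro g hg hne hpg
    apply hne
    have : ¬ Squarefree (p * g) := by
      intro hsq
      exact hp.not_isUnit (hsq p (by obtain ⟨g', rfl⟩ := hpg; exact ⟨g', by ring⟩))
    rw [ht]
    simp [ArithmeticFunction.moebius_eq_zero_of_not_squarefree this]
  rw [step, hfilter]
  rw [← Finset.sum_add_distrib]
  apply Finset.sum_eq_zero
  intro g hg
  simp only [Finset.mem_filter, Nat.mem_divisors] at hg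
  have hg0 : g ≠ 0 := fun h => by
    subst h; exact hg.2 (dvd_zero p)
  rw [key g hg0 hg.1.1 hg.2]
  ring

lemma sum_squarefree : ∀ m : ℕ, Squarefree m →
    ∑ g ∈ m.divisors, (ArithmeticFunction.moebius g : ℚ) / (g * Nat.totient (m / g)) =
      1 / (m * Nat.totient m) := by
  intro m
  induction m using Nat.strong_induction_on with
  | _ m ih =>
  intro hsq
  have hm0 : m ≠ 0 := hsq.ne_zero
  rcases eq_or_ne m 1 with rfl | hm1
  · simp
  set p := m.minFac with hpdef
  have hp : p.Prime := Nat.minFac_prime hm1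
  have hpm : p ∣ m := Nat.minFac_dvd m
  set m' := m / p with hm'def
  have hmm : m = p * m' := (Nat.mul_div_cancel' hpm).symm
  have hpm' : ¬ p ∣ m' := by
    intro h
    exact hp.not_isUnit (hsq p (by rw [hmm]; exact mul_dvd_mul_left p h))
  have hm'0 : m' ≠ 0 := by
    intro h
    exact hm0 (by rw [hmm, h, mul_zero])
  have hm'lt : m' < m := Nat.div_lt_self (Nat.pos_of_ne_zero hm0) hp.one_lt
  have hsq' : Squarefree m' := hsq.squarefree_of_dvd (Nat.div_dvd_of_dvd hpm)
  set t : ℕ → ℚ := fun g =>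
    (ArithmeticFunction.moebius g : ℚ) / (g * Nat.totient (m / g)) with htdef
  rw [sum_div_split p m hpm hm0 hp.ne_zero t]
  have hfilter : m.divisors.filter (fun g => ¬ p ∣ g) = m'.divisors := by
    ext g
    simp only [Finset.mem_filter, Nat.mem_divisors]
    constructor
    · rintro ⟨⟨hgm, _⟩, hpg⟩
      have hcop : Nat.Coprime g p := ((Nat.Prime.coprime_iff_not_dvd hp).mpr hpg).symm
      exact ⟨hcop.dvd_of_dvd_mul_left (by rwa [← hmm]), hm'0⟩
    · rintro ⟨hgm', _⟩
      exact ⟨⟨hgm'.trans (Nat.div_dvd_of_dvd hpm), hm0⟩, fun h => hpm' (h.trans hgm')⟩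
  rw [hfilter, ← Finset.sum_add_distrib]
  have hφp : (Nat.totient p : ℚ) = (p : ℚ) - 1 := by
    rw [Nat.totient_prime hp]
    push_cast [Nat.cast_sub hp.one_lt.le]
    ring
  have key : ∀ g ∈ m'.divisors, t g + t (p * g) =
      ((ArithmeticFunction.moebius g : ℚ) / (g * Nat.totient (m' / g))) /
        (p * Nat.totient p) := by
    intro g hg
    rw [Nat.mem_divisors] at hg
    obtain ⟨hgm', _⟩ := hg
    have hg0 : g ≠ 0 := fun h => hm'0 (zero_dvd_iff.mp (h ▸ hgm'))
    have hpg : ¬ p ∣ g := fun h => hpm' (h.trans hgm')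
    have hcop : Nat.Coprime p g := (Nat.Prime.coprime_iff_not_dvd hp).mpr hpg
    have hdvd1 : m / g = p * (m' / g) := by
      rw [hmm, Nat.mul_div_assoc p hgm']
    have hdvd2 : m / (p * g) = m' / g := by
      rw [hmm, Nat.mul_div_mul_left _ _ hp.pos]
    have hcop2 : Nat.Coprime p (m' / g) :=
      (Nat.Prime.coprime_iff_not_dvd hp).mpr fun h => hpm' (h.trans (Nat.div_dvd_of_dvd hgm'))
    have hφ : Nat.totient (m / g) = Nat.totient p * Nat.totient (m' / g) := by
      rw [hdvd1, Nat.totient_mul hcop2]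
    have hmu : ArithmeticFunction.moebius (p * g) = - ArithmeticFunction.moebius g := by
      rw [ArithmeticFunction.isMultiplicative_moebius.map_mul_of_coprime hcop,
        ArithmeticFunction.moebius_apply_prime hp, neg_one_mul]
    have hK0 : (Nat.totient (m' / g) : ℚ) ≠ 0 := by
      exact_mod_cast (Nat.totient_pos.mpr (Nat.div_pos
        (Nat.le_of_dvd (Nat.pos_of_ne_zero hm'0) hgm') (Nat.pos_of_ne_zero hg0))).ne'
    rw [htdef]
    simp only [hdvd2, hφ, hmu]
    push_cast [hφp]
    have hG0 : (g : ℚ) ≠ 0 := Nat.cast_ne_zero.mpr hg0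
    have hP0 : (p : ℚ) ≠ 0 := Nat.cast_ne_zero.mpr hp.ne_zero
    have hP1 : (p : ℚ) - 1 ≠ 0 := by
      have : (1 : ℚ) < p := by exact_mod_cast hp.one_lt
      linarith
    rw [hφp] at *
    field_simp
    ring
  rw [Finset.sum_congr rfl key, ← Finset.sum_div, ih m' hm'lt hsq']
  have hφm : Nat.totient m = Nat.totient p * Nat.totient m' := by
    rw [hmm, Nat.totient_mul ((Nat.Prime.coprime_iff_not_dvd hp).mpr hpm')]
  rw [hφm, hmm]
  push_cast
  ring

/-- For `r d` with `rd ∣ q`: `∑_{g ∣ q/(rd)} μ(g)/(g φ(q/g))` equals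
`μ²(q/(rd)) rd/(q φ(q))` if `gcd(rd, q/(rd)) = 1`, and `0` otherwise. -/
theorem sum_moebius_div_totient_eq (q r d : ℕ) (hq : 0 < q) (hr : 0 < r) (hd : 0 < d)
    (hdvd : r * d ∣ q) :
    ∑ g ∈ (q / (r * d)).divisors,
        (ArithmeticFunction.moebius g : ℚ) / (g * Nat.totient (q / g)) =
      if Nat.Coprime (r * d) (q / (r * d)) then
        (ArithmeticFunction.moebius (q / (r * d)) : ℚ) ^ 2 * (r * d) /
          (q * Nat.totient q)
      else 0 := by
  set n := r * d with hn
  have hn0 : n ≠ 0 := by positivity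
  set m := q / n with hmdef
  have hqm : q = n * m := (Nat.mul_div_cancel' hdvd).symm
  have hm0 : m ≠ 0 := by
    intro h
    rw [hqm, h, mul_zero] at hq
    exact lt_irrefl 0 hq
  have hmq : m ∣ q := Nat.div_dvd_of_dvd hdvd
  by_cases hcop : Nat.Coprime n m
  · rw [if_pos hcop]
    by_cases hsq : Squarefree m
    · have key : ∀ g ∈ m.divisors,
          (ArithmeticFunction.moebius g : ℚ) / (g * Nat.totient (q / g)) =
            ((ArithmeticFunction.moebius g : ℚ) / (g * Nat.totient (m / g))) /
              (Nat.totient n) := by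
        intro g hg
        rw [Nat.mem_divisors] at hg
        have hqg : q / g = n * (m / g) := by rw [hqm, Nat.mul_div_assoc n hg.1]
        have hφ : Nat.totient (q / g) = Nat.totient n * Nat.totient (m / g) := by
          rw [hqg, Nat.totient_mul (hcop.coprime_dvd_right (Nat.div_dvd_of_dvd hg.1))]
        rw [hφ]
        push_cast
        ring
      rw [Finset.sum_congr rfl key, ← Finset.sum_div, sum_squarefree m hsq]
      have hμ : ((ArithmeticFunction.moebius m : ℚ)) ^ 2 = 1 := by
        have : (ArithmeticFunction.moebius m) ^ 2 = 1 := by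
          rw [ArithmeticFunction.moebius_apply_of_squarefree hsq, ← pow_mul, mul_comm,
            pow_mul, neg_one_sq, one_pow]
        exact_mod_cast congrArg (fun z : ℤ => (z : ℚ)) this
      rw [hμ, hqm, Nat.totient_mul hcop]
      have h1 : (n : ℚ) ≠ 0 := Nat.cast_ne_zero.mpr hn0
      have h2 : (m : ℚ) ≠ 0 := Nat.cast_ne_zero.mpr hm0
      have h3 : (Nat.totient n : ℚ) ≠ 0 :=
        Nat.cast_ne_zero.mpr (Nat.totient_pos.mpr (Nat.pos_of_ne_zero hn0)).ne'
      have h4 : (Nat.totient m : ℚ) ≠ 0 :=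
        Nat.cast_ne_zero.mpr (Nat.totient_pos.mpr (Nat.pos_of_ne_zero hm0)).ne'
      push_cast
      field_simp
      rw [hn]
      push_cast
      ring
    · rw [ArithmeticFunction.moebius_eq_zero_of_not_squarefree hsq]
      have : ∃ p, Nat.Prime p ∧ p * p ∣ m := by
        by_contra h
        push_neg at h
        exact hsq (Nat.squarefree_iff_prime_squarefree.mpr
          (fun x hx => h x hx))
      obtain ⟨p, hp, hpp⟩ := this
      rw [sum_zero q m p hp hq.ne' hm0 hmq (dvd_trans (dvd_mul_left p p) hpp |>.trans dvd_rfl) (by rw [pow_two]; exact hpp.trans hmq)]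
      simp
  · rw [if_neg hcop]
    have hg1 : Nat.gcd n m ≠ 1 := hcop
    obtain ⟨p, hp, hpg⟩ := Nat.exists_prime_and_dvd hg1
    have hpn : p ∣ n := hpg.trans (Nat.gcd_dvd_left n m)
    have hpm : p ∣ m := hpg.trans (Nat.gcd_dvd_right n m)
    have hp2 : p ^ 2 ∣ q := by
      rw [hqm, pow_two]
      exact mul_dvd_mul hpn hpm
    exact sum_zero q m p hp hq.ne' hm0 hmq hpm hp2
end

section
/- For every irrational α, if p_m/q_m denote the convergents of the continued fraction expansion of α, then Σ_{m=1}^∞ 1/φ(q_m) is bounded by an absolute constant independent of α. -/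
open Real
open scoped Nat

/-!
Since `q_{m+2} ≥ q_{m+1} + q_m ≥ 2 q_m`, the denominators grow like `2^{m/2}`, and the elementary
bound `n ≤ 2 φ(n)^2` (from `p^k ≤ φ(p^k)^2` for odd primes `p`) turns this into
`1/φ(q_m) ≤ 2 r^m` with `r = 2^{-1/4}`; the series is then dominated by a geometric one.
-/

namespace Nat

theorem prime_pow_le_totient_sq {p : ℕ} (hp : p.Prime) (hp2 : p ≠ 2) (k : ℕ) :
    p ^ k ≤ φ (p ^ k) ^ 2 := by
  rcases k with _ | j
  · simp
  have hp3 : 3 ≤ p := lt_of_le_of_ne hp.two_le (Ne.symm hp2)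
  have hp_le : p ≤ (p - 1) ^ 2 := by
    obtain ⟨d, rfl⟩ := Nat.exists_eq_add_of_le hp3
    simp only [show 3 + d - 1 = d + 2 by omega]
    nlinarith
  rw [totient_prime_pow_succ hp, pow_succ, mul_pow, sq (p ^ j), mul_assoc]
  exact Nat.mul_le_mul_left _ (le_mul_of_one_le_of_le (Nat.one_le_pow _ _ hp.pos) hp_le)

theorem le_totient_sq_of_odd {n : ℕ} (hn : Odd n) : n ≤ φ n ^ 2 := by
  induction n using Nat.recOnPosPrimePosCoprime with
  | prime_pow p k hp _ =>
    refine prime_pow_le_totient_sq hp ?_ k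
    rintro rfl
    exact Nat.not_even_iff_odd.mpr hn ((Nat.even_pow' (by omega)).mpr even_two)
  | zero => simp at hn
  | one => simp
  | coprime a b _ _ hab iha ihb =>
    rw [Nat.odd_mul] at hn
    rw [totient_mul hab, mul_pow]
    exact Nat.mul_le_mul (iha hn.1) (ihb hn.2)

theorem two_pow_le_two_mul_totient_sq (k : ℕ) : 2 ^ k ≤ 2 * φ (2 ^ k) ^ 2 := by
  rcases k with _ | j
  · simp
  rw [totient_prime_pow_succ prime_two, Nat.add_one_sub_one, mul_one, ← pow_mul, ← pow_succ']
  exact Nat.pow_le_pow_right two_pos (by omega)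

theorem le_two_mul_totient_sq (n : ℕ) : n ≤ 2 * φ n ^ 2 := by
  rcases eq_or_ne n 0 with rfl | hn
  · simp
  obtain ⟨k, m, hm, rfl⟩ := exists_eq_two_pow_mul_odd hn
  rw [totient_mul (Nat.Coprime.pow_left k (Nat.coprime_two_left.mpr hm)), mul_pow, ← mul_assoc]
  exact Nat.mul_le_mul (two_pow_le_two_mul_totient_sq k) (le_totient_sq_of_odd hm)

end Nat

section Growth

variable {q : ℕ → ℕ} (h0 : 1 ≤ q 0) (h1 : q 0 ≤ q 1) (hrec : ∀ m, q m + q (m + 1) ≤ q (m + 2))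
include h1 hrec

theorem monotone_of_add_le_add_two : Monotone q := by
  refine monotone_nat_of_le_succ fun m => ?_
  induction m with
  | zero => exact h1
  | succ m _ => linarith [hrec m]

include h0 in
theorem two_pow_div_two_le_of_add_le_add_two (m : ℕ) : 2 ^ (m / 2) ≤ q m := by
  induction m using Nat.twoStepInduction with
  | zero => simpa using h0
  | one => simpa using h0.trans h1
  | more m ih _ =>
    have hdouble : 2 * q m ≤ q (m + 2) := by
      linarith [hrec m, monotone_of_add_le_add_two h1 hrec (Nat.le_succ m)]
    rw [show (m + 2) / 2 = m / 2 + 1 by omega, pow_succ']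
    omega

include h0 in
theorem two_pow_le_eight_mul_totient_pow_four_of_add_le_add_two (m : ℕ) :
    2 ^ m ≤ 8 * φ (q m) ^ 4 := by
  have hq := two_pow_div_two_le_of_add_le_add_two h0 h1 hrec m
  have hφ := Nat.le_two_mul_totient_sq (q m)
  have : 2 ^ m ≤ 2 * (2 ^ (m / 2)) ^ 2 := by
    rw [← pow_mul, ← pow_succ']
    exact Nat.pow_le_pow_right two_pos (by omega)
  calc 2 ^ m ≤ 2 * q m ^ 2 := this.trans (Nat.mul_le_mul_left _ (Nat.pow_le_pow_left hq 2))
    _ ≤ 2 * (2 * φ (q m) ^ 2) ^ 2 := Nat.mul_le_mul_left _ (Nat.pow_le_pow_left hφ 2)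
    _ = 8 * φ (q m) ^ 4 := by ring

end Growth

theorem inv_le_two_mul_pow_of_two_pow_le {r x : ℝ} (hr : 0 ≤ r) (hr4 : r ^ 4 = 1 / 2) (hx : 0 < x)
    {m : ℕ} (h : 2 ^ m ≤ 8 * x ^ 4) : x⁻¹ ≤ 2 * r ^ m := by
  refine (pow_le_pow_iff_left₀ (inv_nonneg.mpr hx.le) (by positivity) four_ne_zero).mp ?_
  rw [mul_pow, ← pow_mul, mul_comm m, pow_mul, hr4, inv_pow, one_div_pow]
  have h2m : (0 : ℝ) < 2 ^ m := by positivity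
  rw [inv_le_iff_one_le_mul₀ (by positivity)]
  field_simp
  linarith

/-- For irrational `α` with continued fraction convergents `p_m/q_m`
(denominators satisfying `q_{m+2} = a_{m+2} q_{m+1} + q_m` with partial quotients
`a_m ≥ 1`), the series `∑_m 1/φ(q_m)` is bounded by an absolute constant. -/
theorem sum_one_div_totient_convergent_denoms_bounded :
    ∃ C : ℝ, 0 < C ∧ ∀ α : ℝ, Irrational α → ∀ p : ℕ → ℤ, ∀ qd a : ℕ → ℕ,
      qd 0 = 1 → qd 1 = a 1 → (∀ m, 1 ≤ a m) →
      (∀ m, qd (m + 2) = a (m + 2) * qd (m + 1) + qd m) →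
      (∀ m, |α - (p m : ℝ) / qd m| < 1 / ((qd m : ℝ) * qd (m + 1))) →
      ∀ M : ℕ, ∑ m ∈ Finset.range M, (1 : ℝ) / Nat.totient (qd m) ≤ C := by
  set r : ℝ := (1 / 2) ^ (4⁻¹ : ℝ)
  have hr0 : 0 ≤ r := by positivity
  have hr4 : r ^ 4 = 1 / 2 := by exact_mod_cast rpow_inv_natCast_pow (by norm_num) four_ne_zero
  have hr1 : r < 1 := (pow_lt_one_iff_of_nonneg hr0 four_ne_zero).mp (by norm_num [hr4])
  refine ⟨2 / (1 - r), div_pos two_pos (sub_pos.mpr hr1), ?_⟩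
  intro α _ p qd a hq0 hq1 ha hrec _ M
  have hsuper : ∀ m, qd m + qd (m + 1) ≤ qd (m + 2) := fun m => by
    rw [hrec m]; nlinarith [ha (m + 2)]
  have h0 : 1 ≤ qd 0 := hq0.ge
  have h1 : qd 0 ≤ qd 1 := by rw [hq0, hq1]; exact ha 1
  have hterm : ∀ m, (1 : ℝ) / φ (qd m) ≤ 2 * r ^ m := fun m => by
    have hφ := two_pow_le_eight_mul_totient_pow_four_of_add_le_add_two h0 h1 hsuper m
    have hφ0 : 0 < φ (qd m) := Nat.pos_of_ne_zero fun h => by simp [h] at hφ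
    rw [one_div]
    exact inv_le_two_mul_pow_of_two_pow_le hr0 hr4 (by exact_mod_cast hφ0) (by exact_mod_cast hφ)
  calc ∑ m ∈ Finset.range M, (1 : ℝ) / φ (qd m)
      ≤ ∑ m ∈ Finset.range M, 2 * r ^ m := Finset.sum_le_sum fun m _ => hterm m
    _ ≤ 2 / (1 - r) := sum_le_hasSum _ (fun m _ => by positivity)
        ((hasSum_geometric_of_lt_one hr0 hr1).mul_left 2)
end
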